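/- Let F be an algebraically closed field of arbitrary characteristic, and call an element of the split octonion algebra O over F canonical if it has the form (α₁, 0, 0, α₈) (type D) or the form (γ, (1,0,0), 0, γ) (type K₁) for some α₁, α₈, γ ∈ F. If a and b are canonical octonions and there exists an F-algebra automorphism g of O with g a = b, then either a = b, or both a and b have type D, say a = (α₁, 0, 0, α₈) and b = (α₈, 0, 0, α₁) (i.e. b is obtained from a by swapping the two diagonal entries). -/

import Mathlib

namespace OctoPaper

variable (F : Type*) [Field F]

/-- The split (Zorn matrix) octonion algebra over `F`. -/
structure Octo where
  x1 : F
  u : Fin 3 → F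
  v : Fin 3 → F
  x8 : F

variable {F}

/-- Dot product on `F³`. -/
def dot (u v : Fin 3 → F) : F := u 0 * v 0 + u 1 * v 1 + u 2 * v 2

/-- Cross product on `F³`. -/
def cross (u v : Fin 3 → F) : Fin 3 → F :=
  ![u 1 * v 2 - u 2 * v 1, u 2 * v 0 - u 0 * v 2, u 0 * v 1 - u 1 * v 0]

instance : Mul (Octo F) where
  mul x y :=
    ⟨x.x1 * y.x1 + dot x.u y.v,
     fun i => x.x1 * y.u i + y.x8 * x.u i - cross x.v y.v i,
     fun i => y.x1 * x.v i + x.x8 * y.v i + cross x.u y.u i,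
     x.x8 * y.x8 + dot x.v y.u⟩

instance : Add (Octo F) where add x y := ⟨x.x1 + y.x1, x.u + y.u, x.v + y.v, x.x8 + y.x8⟩
instance : Neg (Octo F) where neg x := ⟨-x.x1, -x.u, -x.v, -x.x8⟩
instance : Sub (Octo F) where sub x y := x + -y
instance : SMul F (Octo F) where smul c x := ⟨c * x.x1, c • x.u, c • x.v, c * x.x8⟩
instance : One (Octo F) where one := ⟨1, 0, 0, 1⟩
instance : Zero (Octo F) where zero := ⟨0, 0, 0, 0⟩

/-- Trace of an octonion. -/
def tr (x : Octo F) : F := x.x1 + x.x8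

/-- Norm of an octonion. -/
def onorm (x : Octo F) : F := x.x1 * x.x8 - dot x.u x.v

/-- Conjugate of an octonion. -/
def conj (x : Octo F) : Octo F := ⟨x.x8, -x.u, -x.v, x.x1⟩

/-- `g` is an `F`-algebra automorphism of the split octonion algebra:
an `F`-linear bijection preserving multiplication. -/
def IsAut (g : Octo F → Octo F) : Prop :=
  Function.Bijective g ∧
  (∀ x y : Octo F, g (x + y) = g x + g y) ∧
  (∀ (c : F) (x : Octo F), g (c • x) = c • g x) ∧
  (∀ x y : Octo F, g (x * y) = g x * g y)

/-- The automorphism `ρ(g)` of `O` attached to `g ∈ SL₃(F)`. -/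
def rho (g : Matrix.SpecialLinearGroup (Fin 3) F) (x : Octo F) : Octo F :=
  ⟨x.x1, Matrix.vecMul x.u (g : Matrix (Fin 3) (Fin 3) F),
   Matrix.vecMul x.v (Matrix.transpose (↑(g⁻¹) : Matrix (Fin 3) (Fin 3) F)), x.x8⟩

/-- The automorphism `ℏ` of `O`. -/
def hbar (x : Octo F) : Octo F := ⟨x.x8, -x.v, -x.u, x.x1⟩

/-- The automorphism `δ₁(u)` of `O`. -/
def delta1 (w : Fin 3 → F) (y : Octo F) : Octo F :=
  ⟨y.x1 - dot w y.v,
   fun i => (y.x1 - y.x8 - dot w y.v) * w i + y.u i,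
   fun i => y.v i - cross y.u w i,
   y.x8 + dot w y.v⟩

/-- The automorphism `δ₂(v)` of `O`. -/
def delta2 (w : Fin 3 → F) (y : Octo F) : Octo F :=
  ⟨y.x1 + dot y.u w,
   fun i => y.u i + cross y.v w i,
   fun i => (-y.x1 + y.x8 - dot y.u w) * w i + y.v i,
   y.x8 - dot y.u w⟩

end OctoPaper

open OctoPaper

section Helpers

variable {F : Type*} [Field F]

lemma octo_ext {x y : Octo F} (h1 : x.x1 = y.x1) (hu : x.u = y.u)
    (hv : x.v = y.v) (h8 : x.x8 = y.x8) : x = y := by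
  cases x; cases y; simp_all

lemma octo_one_mul (x : Octo F) : 1 * x = x := by
  refine octo_ext ?_ ?_ ?_ ?_
  · show 1 * x.x1 + dot (0 : Fin 3 → F) x.v = x.x1
    simp [dot]
  · funext i
    show 1 * x.u i + x.x8 * (0 : Fin 3 → F) i - cross 0 x.v i = x.u i
    fin_cases i <;> simp [cross]
  · funext i
    show x.x1 * (0 : Fin 3 → F) i + 1 * x.v i + cross (0 : Fin 3 → F) x.u i = x.v i
    fin_cases i <;> simp [cross]
  · show 1 * x.x8 + dot (0 : Fin 3 → F) x.u = x.x8
    simp [dot]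

lemma octo_mul_one (x : Octo F) : x * 1 = x := by
  refine octo_ext ?_ ?_ ?_ ?_
  · show x.x1 * 1 + dot x.u (0 : Fin 3 → F) = x.x1
    simp [dot]
  · funext i
    show x.x1 * (0 : Fin 3 → F) i + 1 * x.u i - cross x.v 0 i = x.u i
    fin_cases i <;> simp [cross]
  · funext i
    show 1 * x.v i + x.x8 * (0 : Fin 3 → F) i + cross x.u (0 : Fin 3 → F) i = x.v i
    fin_cases i <;> simp [cross]
  · show x.x8 * 1 + dot x.v (0 : Fin 3 → F) = x.x8
    simp [dot]

lemma aut_one {g : Octo F → Octo F} (hg : IsAut g) : g 1 = 1 := by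
  obtain ⟨⟨hinj, hsurj⟩, hadd, hsmul, hmul⟩ := hg
  obtain ⟨e, he⟩ := hsurj 1
  have h := hmul 1 e
  rw [octo_one_mul, he] at h
  rw [octo_mul_one] at h
  exact h.symm

lemma smul_one_eq (c : F) : c • (1 : Octo F) = ⟨c, 0, 0, c⟩ := by
  refine octo_ext ?_ ?_ ?_ ?_
  · show c * 1 = c; ring
  · funext i; show c * (0 : Fin 3 → F) i = 0; simp
  · funext i; show c * (0 : Fin 3 → F) i = 0; simp
  · show c * 1 = c; ring

lemma key {g : Octo F → Octo F} (hg : IsAut g) {a b : Octo F} (hab : g a = b)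
    (t n : F) (ha : a * a + n • 1 = t • a) : b * b + n • 1 = t • b := by
  obtain ⟨hbij, hadd, hsmul, hmul⟩ := hg
  have h1 : g 1 = 1 := aut_one ⟨hbij, hadd, hsmul, hmul⟩
  have h := congrArg g ha
  rw [hadd, hmul, hsmul, hsmul, hab, h1] at h
  exact h

lemma quadD (a1 a8 : F) :
    (⟨a1, 0, 0, a8⟩ : Octo F) * ⟨a1, 0, 0, a8⟩ + (a1 * a8) • 1
      = (a1 + a8) • (⟨a1, 0, 0, a8⟩ : Octo F) := by
  refine octo_ext ?_ ?_ ?_ ?_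
  · show a1 * a1 + dot (0 : Fin 3 → F) 0 + a1 * a8 * 1 = (a1 + a8) * a1
    simp [dot]; ring
  · funext i
    show (a1 * (0:Fin 3 → F) i + a8 * (0:Fin 3 → F) i - cross 0 0 i) + a1*a8 * (0:Fin 3 → F) i
        = (a1 + a8) * (0:Fin 3 → F) i
    fin_cases i <;> simp [cross]
  · funext i
    show (a1 * (0:Fin 3 → F) i + a8 * (0:Fin 3 → F) i + cross (0:Fin 3 → F) 0 i) + a1*a8 * (0:Fin 3 → F) i
        = (a1 + a8) * (0:Fin 3 → F) i
    fin_cases i <;> simp [cross]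
  · show a8 * a8 + dot (0 : Fin 3 → F) 0 + a1 * a8 * 1 = (a1 + a8) * a8
    simp [dot]; ring

lemma quadK (c : F) :
    (⟨c, ![1,0,0], 0, c⟩ : Octo F) * ⟨c, ![1,0,0], 0, c⟩ + (c * c) • 1
      = (c + c) • (⟨c, ![1,0,0], 0, c⟩ : Octo F) := by
  refine octo_ext ?_ ?_ ?_ ?_
  · show c * c + dot ![(1:F),0,0] 0 + c * c * 1 = (c + c) * c
    simp [dot]; ring
  · funext i
    show (c * (![(1:F),0,0]) i + c * (![(1:F),0,0]) i - cross 0 0 i) + c*c * (0:Fin 3 → F) i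
        = (c + c) * (![(1:F),0,0]) i
    fin_cases i <;> simp [cross] <;> ring
  · funext i
    show (c * (0:Fin 3 → F) i + c * (0:Fin 3 → F) i + cross ![(1:F),0,0] ![1,0,0] i) + c*c * (0:Fin 3 → F) i
        = (c + c) * (0:Fin 3 → F) i
    fin_cases i <;> simp [cross]
  · show c * c + dot (0:Fin 3 → F) ![(1:F),0,0] + c * c * 1 = (c + c) * c
    simp [dot]; ring

lemma eqnD {b1 b8 t n : F}
    (h : (⟨b1, 0, 0, b8⟩ : Octo F) * ⟨b1, 0, 0, b8⟩ + n • 1 = t • (⟨b1, 0, 0, b8⟩ : Octo F)) :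
    b1 * b1 + n = t * b1 ∧ b8 * b8 + n = t * b8 := by
  constructor
  · have := congrArg Octo.x1 h
    have e : b1 * b1 + dot (0 : Fin 3 → F) 0 + n * 1 = t * b1 := this
    simpa [dot] using e
  · have := congrArg Octo.x8 h
    have e : b8 * b8 + dot (0 : Fin 3 → F) 0 + n * 1 = t * b8 := this
    simpa [dot] using e

lemma eqnK {c t n : F}
    (h : (⟨c, ![1,0,0], 0, c⟩ : Octo F) * ⟨c, ![1,0,0], 0, c⟩ + n • 1
        = t • (⟨c, ![1,0,0], 0, c⟩ : Octo F)) :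
    c * c + n = t * c ∧ c + c = t := by
  constructor
  · have e : c * c + dot ![(1:F),0,0] 0 + n * 1 = t * c := congrArg Octo.x1 h
    simpa [dot] using e
  · have e : (c * (![(1:F),0,0]) 0 + c * (![(1:F),0,0]) 0 - cross 0 0 0) + n * (0:Fin 3 → F) 0
        = t * (![(1:F),0,0]) 0 := congrArg (fun z => Octo.u z 0) h
    simp [cross] at e
    exact e

lemma scalar_target {g : Octo F → Octo F} (hg : IsAut g) {a : Octo F} (c : F)
    (hab : g a = c • 1) : a = c • 1 := by
  obtain ⟨⟨hinj, hsurj⟩, hadd, hsmul, hmul⟩ := hg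
  apply hinj
  rw [hab, hsmul, aut_one ⟨⟨hinj, hsurj⟩, hadd, hsmul, hmul⟩]

lemma scalar_source {g : Octo F → Octo F} (hg : IsAut g) {b : Octo F} (c : F)
    (hab : g (c • 1) = b) : b = c • 1 := by
  obtain ⟨hbij, hadd, hsmul, hmul⟩ := hg
  rw [← hab, hsmul, aut_one ⟨hbij, hadd, hsmul, hmul⟩]

end Helpers


/-- Uniqueness of the canonical form of one octonion (Proposition 3.1, uniqueness part). -/
theorem one_octonion_uniqueness (F : Type*) [Field F] [IsAlgClosed F] (a b : Octo F)
    (ha : (∃ a1 a8 : F, a = ⟨a1, 0, 0, a8⟩) ∨ (∃ c : F, a = ⟨c, ![1, 0, 0], 0, c⟩))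
    (hb : (∃ b1 b8 : F, b = ⟨b1, 0, 0, b8⟩) ∨ (∃ c : F, b = ⟨c, ![1, 0, 0], 0, c⟩))
    (h : ∃ g : Octo F → Octo F, IsAut g ∧ g a = b) :
    a = b ∨ ∃ a1 a8 : F, a = ⟨a1, 0, 0, a8⟩ ∧ b = ⟨a8, 0, 0, a1⟩ := by
  obtain ⟨g, hg, hgab⟩ := h
  rcases ha with ⟨a1, a8, ha⟩ | ⟨ca, ha⟩ <;> rcases hb with ⟨b1, b8, hb⟩ | ⟨cb, hb⟩
  · -- D D
    by_cases hbb : b1 = b8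
    · -- b is scalar
      left
      have hsc : g a = b1 • 1 := by rw [hgab, hb, hbb, smul_one_eq]
      have := scalar_target hg b1 hsc
      rw [this, hb, hbb, smul_one_eq]
    · have heq := key hg hgab (a1 + a8) (a1 * a8) (by rw [ha]; exact quadD a1 a8)
      rw [hb] at heq
      obtain ⟨e1, e8⟩ := eqnD heq
      have f1 : (b1 - a1) * (b1 - a8) = 0 := by linear_combination e1
      have f8 : (b8 - a1) * (b8 - a8) = 0 := by linear_combination e8
      rcases mul_eq_zero.mp f1 with h1 | h1 <;> rcases mul_eq_zero.mp f8 with h8 | h8 <;>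
        rw [sub_eq_zero] at h1 h8
      · exact absurd (h1.trans h8.symm) hbb
      · left; rw [ha, hb, h1, h8]
      · right; exact ⟨a1, a8, ha, by rw [hb, h1, h8]⟩
      · exact absurd (h1.trans h8.symm) hbb
  · -- D K
    left
    have heq := key hg hgab (a1 + a8) (a1 * a8) (by rw [ha]; exact quadD a1 a8)
    rw [hb] at heq
    obtain ⟨e1, e2⟩ := eqnK heq
    have : (a1 - a8) * (a1 - a8) = 0 := by linear_combination (-4) * e1 + (2*cb - a1 - a8) * e2
    have haa : a1 = a8 := by rwa [mul_self_eq_zero, sub_eq_zero] at this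
    have hsc : g (a1 • 1) = b := by rw [← hgab, ha, haa, smul_one_eq]
    have := scalar_source hg a1 hsc
    rw [this, ha, haa, smul_one_eq]
  · -- K D
    left
    have heq := key hg hgab (ca + ca) (ca * ca) (by rw [ha]; exact quadK ca)
    rw [hb] at heq
    obtain ⟨e1, e8⟩ := eqnD heq
    have f1 : b1 = ca := by
      have : (b1 - ca) * (b1 - ca) = 0 := by linear_combination e1
      rwa [mul_self_eq_zero, sub_eq_zero] at this
    have f8 : b8 = ca := by
      have : (b8 - ca) * (b8 - ca) = 0 := by linear_combination e8
      rwa [mul_self_eq_zero, sub_eq_zero] at this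
    have hsc : g a = ca • 1 := by rw [hgab, hb, f1, f8, smul_one_eq]
    have := scalar_target hg ca hsc
    rw [this, hb, f1, f8, smul_one_eq]
  · -- K K
    left
    have heq := key hg hgab (ca + ca) (ca * ca) (by rw [ha]; exact quadK ca)
    rw [hb] at heq
    obtain ⟨e1, e2⟩ := eqnK heq
    have : (ca - cb) * (ca - cb) = 0 := by linear_combination e1
    have : ca = cb := by rwa [mul_self_eq_zero, sub_eq_zero] at this
    rw [ha, hb, this]
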